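/- Let M ∈ M_{2n}(ℤ) with characteristic polynomial p irreducible over ℚ and without real roots. Then ℤ^{2n} together with any complex structure J commuting with M is determined up to the choice of a set of n roots of p containing exactly one from each conjugate pair; in particular, if J is a complex structure on ℝ^{2n} with MJ = JM, then the eigenvalues of M on the +i-eigenspace of J form a set of n roots of p with no two complex-conjugate to each other. -/

import Mathlib

/-!
Complexify `M` and `J`. Both commute with complex conjugation, and the roots of `p` are simple
(`p` is irreducible over `ℚ`), so every eigenspace of `M` is a line. Because `J` commutes with
`M` and `J² = -1`, each of these lines lies in the `i`- or the `-i`-eigenspace of `J`, and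
conjugation maps the `μ`-eigenline to the `conj μ`-eigenline while exchanging `i` and `-i`.
Hence exactly one root of each conjugate pair is an eigenvalue on the `i`-eigenspace, which
gives `n` of the `2n` roots.
-/

open Matrix Polynomial Module End ComplexConjugate

section Eigenvectors

variable {K V : Type*} [Field K] [AddCommGroup V] [Module K V] [FiniteDimensional K V]

lemma Module.End.HasEigenvector.exists_smul_eq_of_separable {f : End K V} {μ : K} {v w : V}
    (hsep : f.charpoly.Separable) (hv : f.HasEigenvector μ v) (hw : f w = μ • w) :
    ∃ c : K, c • v = w := by
  have hle : finrank K (f.eigenspace μ) ≤ 1 :=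
    (LinearMap.finrank_eigenspace_le f μ).trans (rootMultiplicity_le_one_of_separable hsep μ)
  have hv0 : (⟨v, hv.1⟩ : f.eigenspace μ) ≠ 0 := Subtype.coe_ne_coe.mp hv.2
  have hone : finrank K (f.eigenspace μ) = 1 :=
    le_antisymm hle (Module.finrank_pos_iff_exists_ne_zero.mpr ⟨_, hv0⟩)
  obtain ⟨c, hc⟩ := (finrank_eq_one_iff_of_nonzero' _ hv0).mp hone ⟨w, mem_eigenspace_iff.mpr hw⟩
  exact ⟨c, congrArg Subtype.val hc⟩

end Eigenvectors

section ComplexStructure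

variable {V : Type*} [AddCommGroup V] [Module ℂ V]

/-- The witness is `v - I • j v`, which lies in the `I`-eigenspace of `j`; if it vanishes, `v`
itself lies in the `-I`-eigenspace. -/
lemma Module.End.HasEigenvector.exists_of_commute_of_mul_self_eq_neg_one {f j : End ℂ V}
    {μ : ℂ} {v : V} (hj : j * j = -1) (hfj : Commute f j) (hv : f.HasEigenvector μ v) :
    ∃ w, f.HasEigenvector μ w ∧ (j w = Complex.I • w ∨ j w = -Complex.I • w) := by
  have hjj : j (j v) = -v := by simpa using congrArg (· v) hj
  have hfv : f v = μ • v := mem_eigenspace_iff.mp hv.1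
  by_cases hw : v - Complex.I • j v = 0
  · refine ⟨v, hv, Or.inr ?_⟩
    rw [sub_eq_zero] at hw
    calc j v = j (Complex.I • j v) := by rw [← hw]
      _ = -Complex.I • v := by rw [map_smul, hjj, smul_neg, neg_smul]
  · refine ⟨_, hasEigenvector_iff.mpr ⟨?_, hw⟩, Or.inl ?_⟩
    · have hfjv : f (j v) = μ • j v := by
        rw [← Module.End.mul_apply, hfj.eq, Module.End.mul_apply, hfv, map_smul]
      rw [mem_eigenspace_iff, map_sub, map_smul, hfv, hfjv, smul_sub, smul_comm]
    · rw [map_sub, map_smul, hjj, smul_sub, smul_smul, Complex.I_mul_I, neg_one_smul, smul_neg]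
      abel

end ComplexStructure

section RealStructure

variable {V : Type*} [AddCommGroup V] [Module ℂ V] [StarAddMonoid V] [StarModule ℂ V]

lemma Module.End.apply_star_eq_smul {f : End ℂ V} (hf : ∀ v, f (star v) = star (f v))
    {c : ℂ} {v : V} (hv : f v = c • v) : f (star v) = conj c • star v := by
  rw [hf, hv, star_smul, Complex.star_def]

lemma Module.End.HasEigenvector.star {f : End ℂ V} (hf : ∀ v, f (star v) = star (f v))
    {μ : ℂ} {v : V} (hv : f.HasEigenvector μ v) : f.HasEigenvector (conj μ) (star v) :=
  hasEigenvector_iff.mpr ⟨mem_eigenspace_iff.mpr (apply_star_eq_smul hf hv.apply_eq_smul),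
    star_ne_zero.mpr hv.2⟩

variable [FiniteDimensional ℂ V] {f j : End ℂ V}

/-- `star v` and `w` span the same line, the simple `conj μ`-eigenspace, but `j` acts on them by
`-I` and `I`. -/
lemma Module.End.not_hasEigenvector_conj_of_separable (hf : ∀ v, f (star v) = star (f v))
    (hj : ∀ v, j (star v) = star (j v)) (hsep : f.charpoly.Separable) {μ : ℂ} {v w : V}
    (hv : f.HasEigenvector μ v) (hjv : j v = Complex.I • v)
    (hw : f.HasEigenvector (conj μ) w) (hjw : j w = Complex.I • w) : False := by
  have hjv' : j (star v) = -Complex.I • star v := by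
    rw [apply_star_eq_smul hj hjv, Complex.conj_I]
  obtain ⟨c, rfl⟩ := (hv.star hf).exists_smul_eq_of_separable hsep hw.apply_eq_smul
  have h2I : (2 * Complex.I) • (c • star v) = 0 := by
    rw [map_smul, hjv', smul_comm] at hjw
    rw [two_mul, add_smul]
    nth_rewrite 1 [← hjw]
    rw [neg_smul, neg_add_cancel]
  exact hw.2 ((smul_eq_zero.mp h2I).resolve_left (by simp))

theorem Module.End.exists_finset_eigenvalues_on_eigenspace_I
    (hf : ∀ v, f (star v) = star (f v)) (hj : ∀ v, j (star v) = star (j v))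
    (hj2 : j * j = -1) (hfj : Commute f j) (hsep : f.charpoly.Separable) :
    ∃ s : Finset ℂ, 2 * s.card = finrank ℂ V ∧ (∀ μ ∈ s, ∀ ν ∈ s, conj μ ≠ ν) ∧
      ∀ μ, μ ∈ s ↔ ∃ v, f.HasEigenvector μ v ∧ j v = Complex.I • v := by
  classical
  set P : ℂ → Prop := fun μ ↦ ∃ v, f.HasEigenvector μ v ∧ j v = Complex.I • v
  have hroot {μ : ℂ} (hμ : ∃ v, f.HasEigenvector μ v) : μ ∈ f.charpoly.roots := by
    obtain ⟨v, hv⟩ := hμ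
    exact (mem_roots f.charpoly_monic.ne_zero).mpr
      ((hasEigenvalue_iff_isRoot_charpoly f μ).mp (hasEigenvalue_of_hasEigenvector hv))
  set s := f.charpoly.roots.toFinset.filter P
  have hmem (μ : ℂ) : μ ∈ s ↔ P μ := by
    simp only [s, Finset.mem_filter, Multiset.mem_toFinset, and_iff_right_iff_imp]
    exact fun ⟨v, hv, _⟩ ↦ hroot ⟨v, hv⟩
  have hconj : ∀ μ ∈ s, ∀ ν ∈ s, conj μ ≠ ν := by
    rintro μ hμ _ hν rfl
    obtain ⟨v, hv, hjv⟩ := (hmem μ).mp hμ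
    obtain ⟨w, hw, hjw⟩ := (hmem _).mp hν
    exact not_hasEigenvector_conj_of_separable hf hj hsep hv hjv hw hjw
  have hroots : f.charpoly.roots.toFinset = s ∪ s.image conj := by
    ext μ
    simp only [Multiset.mem_toFinset, Finset.mem_union, Finset.mem_image, hmem]
    constructor
    · intro hμ
      obtain ⟨v, hv⟩ := f.hasEigenvalue_iff_isRoot_charpoly μ |>.mpr
        ((mem_roots f.charpoly_monic.ne_zero).mp hμ) |>.exists_hasEigenvector
      obtain ⟨w, hw, hjw | hjw⟩ :=
        hv.exists_of_commute_of_mul_self_eq_neg_one hj2 hfj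
      · exact Or.inl ⟨w, hw, hjw⟩
      · refine Or.inr ⟨conj μ, ⟨star w, hw.star hf, ?_⟩, Complex.conj_conj μ⟩
        rw [apply_star_eq_smul hj hjw, map_neg, Complex.conj_I, neg_neg]
    · rintro (hμ | ⟨ν, ⟨v, hv, -⟩, rfl⟩)
      · exact hroot (hμ.imp fun _ ↦ And.left)
      · exact hroot ⟨star v, hv.star hf⟩
  refine ⟨s, ?_, hconj, hmem⟩
  have hdisj : Disjoint s (s.image conj) := by
    rw [Finset.disjoint_left]
    intro μ hμ hμ'
    obtain ⟨ν, hν, rfl⟩ := Finset.mem_image.mp hμ'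
    exact hconj ν hν _ hμ rfl
  calc 2 * s.card = (s ∪ s.image conj).card := by
        rw [Finset.card_union_of_disjoint hdisj,
          Finset.card_image_of_injective _ (RingHom.injective _), two_mul]
    _ = finrank ℂ V := by
        rw [← hroots, Multiset.toFinset_card_of_nodup (nodup_roots hsep),
          IsAlgClosed.card_roots_eq_natDegree, LinearMap.charpoly_natDegree]

end RealStructure

section MatrixComplexification

variable {ι : Type*} [Fintype ι] [DecidableEq ι]

lemma Matrix.toLin'_map_ofReal_star (B : Matrix ι ι ℝ) (v : ι → ℂ) :
    toLin' (B.map (↑)) (star v) = star (toLin' (B.map (↑)) v) := by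
  ext i
  simp [mulVec, dotProduct, star_sum]

lemma Matrix.toLin'_map_ofReal_mul (A B : Matrix ι ι ℝ) :
    toLin' ((A * B).map ((↑) : ℝ → ℂ)) = toLin' (A.map (↑)) * toLin' (B.map (↑)) := by
  exact (congrArg toLin' (Matrix.map_mul (f := Complex.ofRealHom))).trans (toLin'_mul _ _)

end MatrixComplexification

theorem stmt18_general (n : ℕ) (M : Matrix (Fin (2 * n)) (Fin (2 * n)) ℤ)
    (hirr : Irreducible (M.map ((↑) : ℤ → ℚ)).charpoly)
    (J : Matrix (Fin (2 * n)) (Fin (2 * n)) ℝ)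
    (hJ : J * J = -1)
    (hcomm : M.map ((↑) : ℤ → ℝ) * J = J * M.map ((↑) : ℤ → ℝ)) :
    ∃ s : Finset ℂ, s.card = n ∧
      (∀ μ ∈ s, Polynomial.aeval μ (M.map ((↑) : ℤ → ℚ)).charpoly = 0) ∧
      (∀ μ ∈ s, ∀ ν ∈ s, (starRingEnd ℂ) μ ≠ ν) ∧
      (∀ μ : ℂ, μ ∈ s ↔ ∃ v : Fin (2 * n) → ℂ, v ≠ 0 ∧
        Matrix.toLin' (J.map ((↑) : ℝ → ℂ)) v = Complex.I • v ∧
        Matrix.toLin' (M.map ((↑) : ℤ → ℂ)) v = μ • v) := by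
  set MR := M.map ((↑) : ℤ → ℝ)
  have hMR : M.map ((↑) : ℤ → ℂ) = MR.map (↑) := by ext; simp [MR]
  have hcharpoly : (toLin' (MR.map ((↑) : ℝ → ℂ))).charpoly =
      (M.map ((↑) : ℤ → ℚ)).charpoly.map (algebraMap ℚ ℂ) := by
    rw [← hMR, charpoly_toLin', ← charpoly_map, Matrix.map_map]
    congr! 2
  have hj2 : toLin' (J.map ((↑) : ℝ → ℂ)) * toLin' (J.map (↑)) = -1 := by
    rw [← toLin'_map_ofReal_mul, hJ, Matrix.map_neg _ Complex.ofReal_neg,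
      Matrix.map_one _ Complex.ofReal_zero Complex.ofReal_one, map_neg, toLin'_one]
    rfl
  have hfj : Commute (toLin' (MR.map ((↑) : ℝ → ℂ))) (toLin' (J.map (↑))) := by
    rw [Commute, SemiconjBy, ← toLin'_map_ofReal_mul, ← toLin'_map_ofReal_mul, hcomm]
  obtain ⟨s, hcard, hconj, hmem⟩ := exists_finset_eigenvalues_on_eigenspace_I
    (toLin'_map_ofReal_star MR) (toLin'_map_ofReal_star J) hj2 hfj
    (by rw [hcharpoly]; exact hirr.separable.map)
  refine ⟨s, by simpa using hcard, fun μ hμ ↦ ?_, hconj, fun μ ↦ ?_⟩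
  · obtain ⟨v, hv, -⟩ := (hmem μ).mp hμ
    have := (hasEigenvalue_iff_isRoot_charpoly _ μ).mp (hasEigenvalue_of_hasEigenvector hv)
    rwa [hcharpoly, IsRoot, eval_map_algebraMap] at this
  · simp only [hMR, hmem, hasEigenvector_iff, mem_eigenspace_iff]
    exact exists_congr fun v ↦ by tauto

/-- Let `M ∈ M_{2n}(ℤ)` with characteristic polynomial `p` irreducible over `ℚ` and
without real roots, and let `J` be a complex structure on `ℝ^{2n}` (`J² = −1`)
commuting with `M`.  Then the eigenvalues of `M` on the `+i`-eigenspace of `J` form a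
set of `n` roots of `p` no two of which are complex-conjugate to each other. -/
theorem stmt18 (n : ℕ) (M : Matrix (Fin (2 * n)) (Fin (2 * n)) ℤ)
    (hirr : Irreducible (M.map ((↑) : ℤ → ℚ)).charpoly)
    (hreal : ∀ x : ℝ,
      ¬(((M.map ((↑) : ℤ → ℚ)).charpoly.map (algebraMap ℚ ℝ)).IsRoot x))
    (J : Matrix (Fin (2 * n)) (Fin (2 * n)) ℝ)
    (hJ : J * J = -1)
    (hcomm : M.map ((↑) : ℤ → ℝ) * J = J * M.map ((↑) : ℤ → ℝ)) :
    ∃ s : Finset ℂ, s.card = n ∧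
      (∀ μ ∈ s, Polynomial.aeval μ (M.map ((↑) : ℤ → ℚ)).charpoly = 0) ∧
      (∀ μ ∈ s, ∀ ν ∈ s, (starRingEnd ℂ) μ ≠ ν) ∧
      (∀ μ : ℂ, μ ∈ s ↔ ∃ v : Fin (2 * n) → ℂ, v ≠ 0 ∧
        Matrix.toLin' (J.map ((↑) : ℝ → ℂ)) v = Complex.I • v ∧
        Matrix.toLin' (M.map ((↑) : ℤ → ℂ)) v = μ • v) :=
  stmt18_general n M hirr J hJ hcomm
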